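/- Equivalence of LTL₃ with the original non-inductive definition: for every LTL formula φ and every finite trace t, t ∈ ⟦φ⟧₃ T iff all infinite extensions tu (u ∈ Σ^ω) satisfy tu ∈ ⟦φ⟧ T, and t ∈ ⟦φ⟧₃ F iff all infinite extensions tu satisfy tu ∈ ⟦φ⟧ F. -/

import Mathlib

/-- A trace is a finite list of states or an infinite stream of states. -/
def Trace (σ : Type) := List σ ⊕ (ℕ → σ)

namespace Trace

variable {σ : Type}

/-- Concatenation of traces; if the first is infinite, the result is the first. -/
def app : Trace σ → Trace σ → Trace σ
  | Sum.inl l, Sum.inl l' => Sum.inl (l ++ l')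
  | Sum.inl l, Sum.inr s =>
      Sum.inr (fun n => if h : n < l.length then l.get ⟨n, h⟩ else s (n - l.length))
  | Sum.inr s, _ => Sum.inr s

instance : Append (Trace σ) := ⟨app⟩

/-- The empty trace ε. -/
def eps : Trace σ := Sum.inl []

/-- A trace is infinite iff it is a stream. -/
def Inf (t : Trace σ) : Prop := t.isRight

/-- Drop the first state of a trace. -/
def drop1 : Trace σ → Trace σ
  | Sum.inl [] => Sum.inl []
  | Sum.inl (_ :: l) => Sum.inl l
  | Sum.inr s => Sum.inr (fun n => s (n + 1))

/-- Drop the first `n` states of a trace. -/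
def drop (t : Trace σ) (n : ℕ) : Trace σ := drop1^[n] t

/-- The first state of a trace, if any. -/
def head? : Trace σ → Option σ
  | Sum.inl [] => none
  | Sum.inl (a :: _) => some a
  | Sum.inr s => some (s 0)

/-- The set of prefixes of a trace. -/
def pre (t : Trace σ) : Set (Trace σ) := {u | ∃ v, t = u ++ v}

/-- The set of prefixes of traces in a set: ↓X. -/
def preS (X : Set (Trace σ)) : Set (Trace σ) := ⋃ t ∈ X, pre t

/-- The set of extensions of a trace: ↑t. -/
def ext (t : Trace σ) : Set (Trace σ) := {u | ∃ v, u = t ++ v}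

/-- The definitive prefixes of a set of traces: ↯X. -/
def dp (X : Set (Trace σ)) : Set (Trace σ) := {t | ext t ⊆ preS X}

/-- A set of traces is definitive iff it equals its own set of definitive prefixes. -/
def Definitive (X : Set (Trace σ)) : Prop := X = dp X

/-- Definitive union ⩁ of a collection of trace sets. -/
def dUnionS (S : Set (Set (Trace σ))) : Set (Trace σ) := dp (⋃₀ S)

/-- Binary / indexed definitive union. -/
def dUnion (X Y : Set (Trace σ)) : Set (Trace σ) := dp (X ∪ Y)

def dUnionI {ι : Sort*} (X : ι → Set (Trace σ)) : Set (Trace σ) := dp (⋃ i, X i)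

/-- The prepend operation ▷X. -/
def prepend (X : Set (Trace σ)) : Set (Trace σ) := {t | t.drop 1 ∈ X}

/-- Σ^ω, the set of infinite traces. -/
def omegaSet (σ : Type) : Set (Trace σ) := {t | t.Inf}

/-- The first state of a trace, with the empty state as default. -/
def st0 {A : Type} (t : Trace (Set A)) : Set A := (t.head?).getD ∅

end Trace

/-- Syntax of LTL formulae over atomic propositions `A`. -/
inductive LTL (A : Type) where
  | top : LTL A
  | atom : A → LTL A
  | neg : LTL A → LTL A
  | and : LTL A → LTL A → LTL A
  | next : LTL A → LTL A
  | until_ : LTL A → LTL A → LTL A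

namespace LTL

variable {A : Type}

open Trace

/-- Conventional LTL satisfaction on (infinite) traces. -/
def Sat : Trace (Set A) → LTL A → Prop
  | t, .top => True
  | t, .atom a => a ∈ t.st0
  | t, .neg φ => ¬ Sat t φ
  | t, .and φ ψ => Sat t φ ∧ Sat t ψ
  | t, .next φ => Sat (t.drop 1) φ
  | t, .until_ φ ψ => ∃ i, Sat (t.drop i) ψ ∧ ∀ j < i, Sat (t.drop j) φ

/-- Answer-indexed family semantics of conventional LTL (sets of infinite traces). -/
def sem : LTL A → Bool → Set (Trace (Set A))
  | .top, true => omegaSet (Set A)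
  | .top, false => ∅
  | .atom a, true => {t | t.Inf ∧ a ∈ t.st0}
  | .atom a, false => {t | t.Inf ∧ a ∉ t.st0}
  | .neg φ, b => sem φ (!b)
  | .and φ ψ, true => sem φ true ∩ sem ψ true
  | .and φ ψ, false => sem φ false ∪ sem ψ false
  | .next φ, b => {t | t.drop 1 ∈ sem φ b}
  | .until_ φ ψ, true => {t | ∃ k, (∀ i < k, t.drop i ∈ sem φ true) ∧ t.drop k ∈ sem ψ true}
  | .until_ φ ψ, false => {t | ∀ k, (∃ i < k, t.drop i ∈ sem φ false) ∨ t.drop k ∈ sem ψ false}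

/-- Answer-indexed family semantics of LTL₃ (definitive sets of finite-or-infinite traces). -/
def sem3 : LTL A → Bool → Set (Trace (Set A))
  | .top, true => Set.univ
  | .top, false => ∅
  | .atom a, true => dp {t | t ≠ eps ∧ a ∈ t.st0}
  | .atom a, false => dp {t | t ≠ eps ∧ a ∉ t.st0}
  | .neg φ, b => sem3 φ (!b)
  | .and φ ψ, true => sem3 φ true ∩ sem3 ψ true
  | .and φ ψ, false => dUnion (sem3 φ false) (sem3 ψ false)
  | .next φ, b => prepend (sem3 φ b)
  | .until_ φ ψ, true =>
      dUnionI (fun k => (fun X => prepend X ∩ sem3 φ true)^[k] (sem3 ψ true))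
  | .until_ φ ψ, false =>
      ⋂ k, (fun X => dUnion (prepend X) (sem3 φ false))^[k] (sem3 ψ false)

end LTL

/-!
By induction on `φ`, `⟦φ⟧₃ b = ↯ ⟦φ⟧ b`, where, over a nonempty alphabet, `t ∈ ↯ X` iff every
infinite extension of `t` lies in `X`. So `↯` commutes with `∩`, `⋂` and `▷`, and `↯ X` depends
only on the infinite traces in `X`, which collapses the definitive unions of the inductive clauses
into plain ones. For Until, `↯` semiconjugates the LTL approximation step `X ↦ ▷X ∩ ⟦φ⟧ T` to the
LTL₃ step `X ↦ ▷X ∩ ↯ ⟦φ⟧ T` (dually for `F`), so each LTL₃ iterate is `↯` of the corresponding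
LTL approximation.
-/

namespace Trace

variable {σ : Type}

def fin (l : List σ) : Trace σ := Sum.inl l

def str (s : Stream' σ) : Trace σ := Sum.inr s

@[induction_eliminator]
lemma fin_str_cases {motive : Trace σ → Prop} (fin : ∀ l, motive (fin l))
    (str : ∀ s, motive (str s)) (t : Trace σ) : motive t := by
  rcases t with l | s
  exacts [fin l, str s]

@[simp] lemma inf_fin (l : List σ) : ¬ (fin l).Inf := Bool.false_ne_true

@[simp] lemma inf_str (s : Stream' σ) : (str s).Inf := rfl

lemma eps_eq_fin : (eps : Trace σ) = fin [] := rfl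

lemma fin_append_fin (l l' : List σ) : fin l ++ fin l' = fin (l ++ l') := rfl

lemma fin_append_str (l : List σ) (s : Stream' σ) : fin l ++ str s = str (l ++ₛ s) := by
  show Sum.inr _ = Sum.inr _
  congr 1
  funext n
  rcases lt_or_ge n l.length with h | h
  · show _ = (l ++ₛ s).get n
    rw [dif_pos h, Stream'.get_append_left n l s h]
    rfl
  · obtain ⟨m, rfl⟩ := Nat.exists_eq_add_of_le h
    show _ = (l ++ₛ s).get (l.length + m)
    rw [dif_neg (by omega), Stream'.get_append_right, Nat.add_sub_cancel_left]
    rfl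

lemma str_append (s : Stream' σ) (u : Trace σ) : str s ++ u = str s := rfl

lemma drop1_fin_cons (a : σ) (l : List σ) : (fin (a :: l)).drop1 = fin l := rfl

lemma drop1_str (s : Stream' σ) : (str s).drop1 = str s.tail := rfl

@[simp] lemma eps_append (u : Trace σ) : eps ++ u = u := by
  induction u with
  | fin l => rfl
  | str s => rw [eps_eq_fin, fin_append_str, Stream'.nil_append_stream]

lemma append_of_inf {t : Trace σ} (ht : t.Inf) (u : Trace σ) : t ++ u = t := by
  induction t with
  | fin l => exact absurd ht (inf_fin l)
  | str s => rfl

lemma inf_append (t : Trace σ) {u : Trace σ} (hu : u.Inf) : (t ++ u).Inf := by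
  induction u with
  | fin l => exact absurd hu (inf_fin l)
  | str s =>
    induction t with
    | fin l => simp [fin_append_str]
    | str s' => simp [str_append]

lemma inf_drop1 {t : Trace σ} (ht : t.Inf) : t.drop1.Inf := by
  induction t with
  | fin l => exact absurd ht (inf_fin l)
  | str s => simp [drop1_str]

lemma drop1_eps : (eps : Trace σ).drop1 = eps := rfl

lemma surjOn_drop1_omegaSet : Set.SurjOn drop1 (omegaSet σ) (omegaSet σ) := by
  intro t ht
  induction t with
  | fin l => exact absurd ht (inf_fin l)
  | str s => exact ⟨str (Stream'.cons s.head s), inf_str _, rfl⟩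

lemma append_assoc (t u v : Trace σ) : t ++ u ++ v = t ++ (u ++ v) := by
  induction t with
  | str s => rfl
  | fin l₁ =>
    induction u with
    | str s => rw [fin_append_str, str_append, str_append, fin_append_str]
    | fin l₂ =>
      induction v with
      | fin l₃ => simp only [fin_append_fin, List.append_assoc]
      | str s => simp only [fin_append_fin, fin_append_str, Stream'.append_append_stream]

lemma ne_eps_of_inf {t : Trace σ} (ht : t.Inf) : t ≠ eps := by
  rintro rfl
  exact inf_fin [] ht

lemma drop1_append {t : Trace σ} (ht : t ≠ eps) (u : Trace σ) :
    (t ++ u).drop1 = t.drop1 ++ u := by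
  induction t with
  | str s => rfl
  | fin l =>
    obtain _ | ⟨a, l⟩ := l
    · exact absurd rfl ht
    induction u with
    | fin l' => rfl
    | str s => rw [fin_append_str, drop1_str, Stream'.cons_append_stream, Stream'.tail_cons,
        drop1_fin_cons, fin_append_str]

@[simp] lemma drop_zero (t : Trace σ) : t.drop 0 = t := rfl

lemma drop_drop (t : Trace σ) (m n : ℕ) : (t.drop m).drop n = t.drop (n + m) :=
  (Function.iterate_add_apply drop1 n m t).symm

lemma iterate_prepend_inter (Y Z : Set (Trace σ)) (k : ℕ) :
    (fun X => prepend X ∩ Y)^[k] Z = {w | (∀ i < k, w.drop i ∈ Y) ∧ w.drop k ∈ Z} := by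
  induction k with
  | zero => simp [drop]
  | succ k ih =>
    rw [Function.iterate_succ_apply', ih]
    ext w
    simp only [prepend, Set.mem_inter_iff, Set.mem_ofPred_eq, drop_drop, drop_zero,
      Nat.forall_lt_succ_left']
    tauto

lemma iterate_prepend_union (Y Z : Set (Trace σ)) (k : ℕ) :
    (fun X => prepend X ∪ Y)^[k] Z = {w | (∃ i < k, w.drop i ∈ Y) ∨ w.drop k ∈ Z} := by
  induction k with
  | zero => simp [drop]
  | succ k ih =>
    rw [Function.iterate_succ_apply', ih]
    ext w
    simp only [prepend, Set.mem_union, Set.mem_ofPred_eq, drop_drop, drop_zero,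
      Nat.exists_lt_succ_left]
    constructor <;> rintro ((h | h) | h) <;> simp only [h, true_or, or_true]

section Nonempty

variable [Nonempty σ]

lemma exists_inf : ∃ u : Trace σ, u.Inf :=
  ⟨str (Stream'.const (Classical.arbitrary σ)), inf_str _⟩

lemma mem_dp_iff {t : Trace σ} {X : Set (Trace σ)} :
    t ∈ dp X ↔ ∀ u : Trace σ, u.Inf → t ++ u ∈ X := by
  constructor
  · intro h u hu
    obtain ⟨x, hx, v, hxv⟩ := Set.mem_iUnion₂.mp (h ⟨u, rfl⟩)
    rwa [hxv, append_of_inf (inf_append t hu)] at hx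
  · rintro h _ ⟨v, rfl⟩
    obtain ⟨u, hu⟩ := exists_inf (σ := σ)
    exact Set.mem_iUnion₂.mpr ⟨_, h _ (inf_append v hu), u, (append_assoc t v u).symm⟩

lemma mem_dp_of_inf {w : Trace σ} (hw : w.Inf) {X : Set (Trace σ)} : w ∈ dp X ↔ w ∈ X := by
  rw [mem_dp_iff]
  refine ⟨fun h => ?_, fun h u _ => by rwa [append_of_inf hw]⟩
  obtain ⟨u, hu⟩ := exists_inf (σ := σ)
  simpa only [append_of_inf hw] using h u hu

lemma dp_congr {X Y : Set (Trace σ)} (h : ∀ w : Trace σ, w.Inf → (w ∈ X ↔ w ∈ Y)) :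
    dp X = dp Y := by
  ext t
  simp only [mem_dp_iff]
  exact forall₂_congr fun u hu => h _ (inf_append t hu)

lemma dp_omegaSet : dp (omegaSet σ) = Set.univ :=
  Set.eq_univ_of_forall fun t => mem_dp_iff.mpr fun _ hu => inf_append t hu

lemma dp_empty : dp (∅ : Set (Trace σ)) = ∅ :=
  Set.eq_empty_of_forall_notMem fun _ h =>
    let ⟨u, hu⟩ := exists_inf (σ := σ)
    mem_dp_iff.mp h u hu

lemma dp_inter (X Y : Set (Trace σ)) : dp (X ∩ Y) = dp X ∩ dp Y := by
  ext t
  simp only [Set.mem_inter_iff, mem_dp_iff, forall₂_and]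

lemma dp_iInter {ι : Sort*} (X : ι → Set (Trace σ)) : dp (⋂ i, X i) = ⋂ i, dp (X i) := by
  ext t
  simp only [Set.mem_iInter, mem_dp_iff]
  exact ⟨fun h i u hu => h u hu i, fun h u hu i => h i u hu⟩

lemma dUnion_dp_dp (X Y : Set (Trace σ)) : dUnion (dp X) (dp Y) = dp (X ∪ Y) :=
  dp_congr fun _ hw => by simp only [Set.mem_union, mem_dp_of_inf hw]

lemma dUnionI_dp {ι : Sort*} (X : ι → Set (Trace σ)) :
    dUnionI (fun i => dp (X i)) = dp (⋃ i, X i) :=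
  dp_congr fun _ hw => by simp only [Set.mem_iUnion, mem_dp_of_inf hw]

lemma prepend_dp (X : Set (Trace σ)) : prepend (dp X) = dp (prepend X) := by
  ext t
  simp only [prepend, mem_dp_iff]
  show (∀ u : Trace σ, u.Inf → t.drop1 ++ u ∈ X) ↔ ∀ u : Trace σ, u.Inf → (t ++ u).drop1 ∈ X
  by_cases ht : t = eps
  · subst ht
    simp only [drop1_eps, eps_append]
    refine ⟨fun h u hu => h _ (inf_drop1 hu), fun h v hv => ?_⟩
    obtain ⟨u, hu, rfl⟩ := surjOn_drop1_omegaSet hv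
    exact h u hu
  · simp only [drop1_append ht]

lemma iterate_prepend_inter_dp (Y Z : Set (Trace σ)) (k : ℕ) :
    (fun X => prepend X ∩ dp Y)^[k] (dp Z) = dp {w | (∀ i < k, w.drop i ∈ Y) ∧ w.drop k ∈ Z} := by
  have hsemiconj : Function.Semiconj dp (fun X => prepend X ∩ Y) (fun X => prepend X ∩ dp Y) :=
    fun X => show dp (prepend X ∩ Y) = prepend (dp X) ∩ dp Y by rw [dp_inter, prepend_dp]
  rw [← iterate_prepend_inter, hsemiconj.iterate_right]

lemma iterate_dUnion_prepend_dp (Y Z : Set (Trace σ)) (k : ℕ) :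
    (fun X => dUnion (prepend X) (dp Y))^[k] (dp Z) =
      dp {w | (∃ i < k, w.drop i ∈ Y) ∨ w.drop k ∈ Z} := by
  have hsemiconj :
      Function.Semiconj dp (fun X => prepend X ∪ Y) (fun X => dUnion (prepend X) (dp Y)) :=
    fun X => show dp (prepend X ∪ Y) = dUnion (prepend (dp X)) (dp Y) by
      rw [prepend_dp, dUnion_dp_dp]
  rw [← iterate_prepend_union, hsemiconj.iterate_right]

end Nonempty

end Trace

namespace LTL

open Trace

variable {A : Type}

theorem sem3_eq_dp_sem (φ : LTL A) (b : Bool) : sem3 φ b = dp (sem φ b) := by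
  induction φ generalizing b with
  | top =>
    cases b
    · exact dp_empty.symm
    · exact dp_omegaSet.symm
  | atom a => cases b <;> exact dp_congr fun w hw => by simp [sem, ne_eps_of_inf hw, hw]
  | neg φ ih => exact ih !b
  | and φ ψ ihφ ihψ =>
    cases b
    · rw [sem3, sem, ihφ, ihψ, dUnion_dp_dp]
    · rw [sem3, sem, ihφ, ihψ, dp_inter]
  | next φ ih => rw [sem3, ih, prepend_dp]; rfl
  | until_ φ ψ ihφ ihψ =>
    cases b
    · rw [sem3, sem, ihφ, ihψ, Set.ofPred_forall, dp_iInter]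
      simp_rw [iterate_dUnion_prepend_dp]
    · rw [sem3, sem, ihφ, ihψ, Set.ofPred_exists]
      simp_rw [iterate_prepend_inter_dp, dUnionI_dp]

end LTL

theorem sem3_eq_noninductive_general {A : Type} (φ : LTL A) (t : Trace (Set A)) :
    (t ∈ LTL.sem3 φ true ↔ ∀ u : Trace (Set A), u.Inf → t ++ u ∈ LTL.sem φ true) ∧
    (t ∈ LTL.sem3 φ false ↔ ∀ u : Trace (Set A), u.Inf → t ++ u ∈ LTL.sem φ false) := by
  simp only [LTL.sem3_eq_dp_sem, Trace.mem_dp_iff, and_self]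

theorem sem3_eq_noninductive {A : Type} (φ : LTL A) (t : Trace (Set A))
    (ht : ¬ t.Inf) :
    (t ∈ LTL.sem3 φ true ↔ ∀ u : Trace (Set A), u.Inf → t ++ u ∈ LTL.sem φ true) ∧
    (t ∈ LTL.sem3 φ false ↔ ∀ u : Trace (Set A), u.Inf → t ++ u ∈ LTL.sem φ false) :=
  sem3_eq_noninductive_general φ t
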